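/- arXiv:1610.06118 — 5 statements merged into one kernel-verified Lean document; each statement's English description precedes it below -/
import Mathlib

section
/- Let T be a bounded linear operator on a complex Hilbert space H and let δ, η ∈ [0,1]. Let X be the operator on the Hilbert space direct sum H ⊕ H defined by X (h, k) = (T h + δ T k, η T k), and set β = 1 + δ² + η². Then ‖X‖² ≤ (1/2)·(β + √(β² − 4η²))·‖T‖². -/
open ContinuousLinearMap in
/-- The block operator `X (h, m) = (T h + A m, B m)` on the Hilbert direct sum `H ⊕₂ M`. -/
noncomputable def blockOp {H M : Type*} [NormedAddCommGroup H] [InnerProductSpace ℂ H]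
    [NormedAddCommGroup M] [InnerProductSpace ℂ M]
    (T : H →L[ℂ] H) (A : M →L[ℂ] H) (B : M →L[ℂ] M) :
    WithLp 2 (H × M) →L[ℂ] WithLp 2 (H × M) :=
  ((WithLp.prodContinuousLinearEquiv 2 ℂ H M).symm : H × M →L[ℂ] WithLp 2 (H × M)) ∘L
    ((T ∘L fst ℂ H M + A ∘L snd ℂ H M).prod (B ∘L snd ℂ H M)) ∘L
    ((WithLp.prodContinuousLinearEquiv 2 ℂ H M) : WithLp 2 (H × M) →L[ℂ] H × M)

/-!
Write `a = ‖T h‖` and `b = ‖T k‖`. Then `‖X (h, k)‖² ≤ (a + |δ| b)² + η² b²`, a quadratic form in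
`(a, b)` with matrix `!![1, |δ|; |δ|, δ² + η²]`. Its largest eigenvalue is `(β + √(β² − 4η²)) / 2`,
and `a² + b² ≤ ‖T‖² ‖(h, k)‖²`.
-/

-- The largest eigenvalue of the symmetric matrix `!![p, r; r, q]`.
noncomputable def topEigenvalue (p q r : ℝ) : ℝ :=
  ((p + q) + √((p - q) ^ 2 + 4 * r ^ 2)) / 2

theorem quadratic_form_nonneg {u v r : ℝ} (hu : 0 ≤ u) (hv : 0 ≤ v) (huv : r ^ 2 ≤ u * v)
    (x y : ℝ) : 0 ≤ u * x ^ 2 - 2 * r * x * y + v * y ^ 2 := by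
  rcases hu.lt_or_eq with hu_pos | rfl
  · -- `u (u x² - 2 r x y + v y²) = (u x - r y)² + (u v - r²) y²`
    nlinarith [sq_nonneg (u * x - r * y), mul_nonneg (sub_nonneg.mpr huv) (sq_nonneg y)]
  · obtain rfl : r = 0 := pow_eq_zero_iff two_ne_zero |>.mp (by nlinarith [sq_nonneg r])
    nlinarith [sq_nonneg y]

theorem le_topEigenvalue_mul (p q r x y : ℝ) :
    p * x ^ 2 + 2 * r * x * y + q * y ^ 2 ≤ topEigenvalue p q r * (x ^ 2 + y ^ 2) := by
  set s := √((p - q) ^ 2 + 4 * r ^ 2)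
  have hs : s ^ 2 = (p - q) ^ 2 + 4 * r ^ 2 := Real.sq_sqrt (by positivity)
  have hps : |p - q| ≤ s := Real.abs_le_sqrt (le_add_of_nonneg_right (by positivity))
  obtain ⟨hqp, hpq⟩ := abs_le.mp hps
  have hu : topEigenvalue p q r - p = (s - (p - q)) / 2 := by unfold topEigenvalue; ring
  have hv : topEigenvalue p q r - q = (s + (p - q)) / 2 := by unfold topEigenvalue; ring
  have := quadratic_form_nonneg (u := topEigenvalue p q r - p) (v := topEigenvalue p q r - q)
    (r := r) (by rw [hu]; linarith) (by rw [hv]; linarith)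
    (by rw [hu, hv]; nlinarith) x y
  linarith

theorem topEigenvalue_nonneg {p q : ℝ} (hp : 0 ≤ p) (hq : 0 ≤ q) (r : ℝ) :
    0 ≤ topEigenvalue p q r := by
  unfold topEigenvalue; positivity

theorem ContinuousLinearMap.opNorm_sq_le_of_norm_sq_le {𝕜 E F : Type*} [NontriviallyNormedField 𝕜]
    [SeminormedAddCommGroup E] [SeminormedAddCommGroup F] [NormedSpace 𝕜 E] [NormedSpace 𝕜 F]
    (f : E →L[𝕜] F) {C : ℝ} (hC : 0 ≤ C) (h : ∀ x, ‖f x‖ ^ 2 ≤ C * ‖x‖ ^ 2) : ‖f‖ ^ 2 ≤ C := by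
  have hf : ‖f‖ ≤ √C := f.opNorm_le_bound (Real.sqrt_nonneg C) fun x => by
    rw [← Real.sqrt_sq (norm_nonneg (f x)), ← Real.sqrt_sq (norm_nonneg x), ← Real.sqrt_mul hC]
    exact Real.sqrt_le_sqrt (h x)
  calc ‖f‖ ^ 2 ≤ √C ^ 2 := by gcongr
    _ = C := Real.sq_sqrt hC

section blockOp

variable {H M : Type*} [NormedAddCommGroup H] [InnerProductSpace ℂ H]
  [NormedAddCommGroup M] [InnerProductSpace ℂ M]

theorem norm_blockOp_apply_sq (T : H →L[ℂ] H) (A : M →L[ℂ] H) (B : M →L[ℂ] M)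
    (x : WithLp 2 (H × M)) :
    ‖blockOp T A B x‖ ^ 2 = ‖T x.fst + A x.snd‖ ^ 2 + ‖B x.snd‖ ^ 2 :=
  WithLp.prod_norm_sq_eq_of_L2 _

open ContinuousLinearMap in
theorem norm_blockOp_smul_apply_sq_le (T : H →L[ℂ] H) (δ η : ℝ) (x : WithLp 2 (H × H)) :
    ‖blockOp T ((δ : ℂ) • T) ((η : ℂ) • T) x‖ ^ 2 ≤
      topEigenvalue 1 (δ ^ 2 + η ^ 2) |δ| * ‖T‖ ^ 2 * ‖x‖ ^ 2 := by
  set a := ‖T x.fst‖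
  set b := ‖T x.snd‖
  have hfst : ‖T x.fst + (δ : ℂ) • T x.snd‖ ≤ a + |δ| * b :=
    (norm_add_le _ _).trans_eq (by rw [norm_smul, Complex.norm_real, Real.norm_eq_abs])
  have hsnd : ‖(η : ℂ) • T x.snd‖ ^ 2 = η ^ 2 * b ^ 2 := by
    rw [norm_smul, Complex.norm_real, Real.norm_eq_abs, mul_pow, sq_abs]
  have hab : a ^ 2 + b ^ 2 ≤ ‖T‖ ^ 2 * ‖x‖ ^ 2 := by
    rw [WithLp.prod_norm_sq_eq_of_L2 x, mul_add, ← mul_pow, ← mul_pow]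
    gcongr <;> exact T.le_opNorm _
  calc ‖blockOp T ((δ : ℂ) • T) ((η : ℂ) • T) x‖ ^ 2
      ≤ (a + |δ| * b) ^ 2 + η ^ 2 * b ^ 2 := by
        rw [norm_blockOp_apply_sq, smul_apply, smul_apply, hsnd]; gcongr
    _ = 1 * a ^ 2 + 2 * |δ| * a * b + (δ ^ 2 + η ^ 2) * b ^ 2 := by rw [← sq_abs δ]; ring
    _ ≤ topEigenvalue 1 (δ ^ 2 + η ^ 2) |δ| * (a ^ 2 + b ^ 2) := le_topEigenvalue_mul ..
    _ ≤ topEigenvalue 1 (δ ^ 2 + η ^ 2) |δ| * (‖T‖ ^ 2 * ‖x‖ ^ 2) :=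
        mul_le_mul_of_nonneg_left hab (topEigenvalue_nonneg zero_le_one (by positivity) _)
    _ = _ := by ring

end blockOp

theorem topEigenvalue_one_sq_add_sq_abs (δ η : ℝ) :
    topEigenvalue 1 (δ ^ 2 + η ^ 2) |δ| =
      (1 / 2) * ((1 + δ ^ 2 + η ^ 2) + √((1 + δ ^ 2 + η ^ 2) ^ 2 - 4 * η ^ 2)) := by
  rw [topEigenvalue, sq_abs]
  ring_nf

theorem statement2_general {H : Type*} [NormedAddCommGroup H] [InnerProductSpace ℂ H]
    (T : H →L[ℂ] H) (δ η : ℝ) :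
    ‖blockOp T ((δ : ℂ) • T) ((η : ℂ) • T)‖ ^ 2 ≤
      (1 / 2) * ((1 + δ ^ 2 + η ^ 2) + Real.sqrt ((1 + δ ^ 2 + η ^ 2) ^ 2 - 4 * η ^ 2)) *
        ‖T‖ ^ 2 := by
  rw [← topEigenvalue_one_sq_add_sq_abs]
  exact ContinuousLinearMap.opNorm_sq_le_of_norm_sq_le _
    (mul_nonneg (topEigenvalue_nonneg zero_le_one (by positivity) _) (sq_nonneg _))
    (norm_blockOp_smul_apply_sq_le T δ η)

/-- For the operator `X (h, k) = (T h + δ T k, η T k)` on `H ⊕₂ H` and `β = 1 + δ² + η²`,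
one has `‖X‖² ≤ (1/2)(β + √(β² − 4η²))‖T‖²`. -/
theorem statement2 {H : Type*} [NormedAddCommGroup H] [InnerProductSpace ℂ H]
    (T : H →L[ℂ] H) (δ η : ℝ) (hδ : δ ∈ Set.Icc (0 : ℝ) 1) (hη : η ∈ Set.Icc (0 : ℝ) 1) :
    ‖blockOp T ((δ : ℂ) • T) ((η : ℂ) • T)‖ ^ 2 ≤
      (1 / 2) * ((1 + δ ^ 2 + η ^ 2) + Real.sqrt ((1 + δ ^ 2 + η ^ 2) ^ 2 - 4 * η ^ 2)) *
        ‖T‖ ^ 2 :=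
  statement2_general T δ η
end

section
/- Let n ≥ 1, let U_1, …, U_n be unitary operators on a complex Hilbert space K, and let T_1, …, T_n be the Parrott tuple on K ⊕ K. Set W_j = U_n⁻¹ U_j for j = 1, …, n. Then (T_1, …, T_n) is extremal if and only if the intersection over all i, j = 1, …, n of the kernels of the commutators W_i W_j − W_j W_i is the zero subspace of K. -/
/-- A tuple of commuting contractions is extremal if every block extension
`X_i (h, m) = (T_i h + A_i m, B_i m)` by commuting contractions has `A_i = 0` for all `i`. -/
def IsExtremal {n : ℕ} {H : Type*} [NormedAddCommGroup H] [InnerProductSpace ℂ H]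
    [CompleteSpace H] (T : Fin n → H →L[ℂ] H) : Prop :=
  ∀ (M : Type*) [NormedAddCommGroup M] [InnerProductSpace ℂ M] [CompleteSpace M],
    ∀ (A : Fin n → M →L[ℂ] H) (B : Fin n → M →L[ℂ] M),
      (∀ i, ‖blockOp (T i) (A i) (B i)‖ ≤ 1) →
      (∀ i j, blockOp (T i) (A i) (B i) ∘L blockOp (T j) (A j) (B j)
            = blockOp (T j) (A j) (B j) ∘L blockOp (T i) (A i) (B i)) →
      ∀ i, A i = 0

open ContinuousLinearMap in
/-- The Parrott operator `T (h, k) = (0, U h)` on the Hilbert direct sum `K ⊕₂ K`. -/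
noncomputable def parrottOp {K : Type*} [NormedAddCommGroup K] [InnerProductSpace ℂ K]
    (U : K →L[ℂ] K) : WithLp 2 (K × K) →L[ℂ] WithLp 2 (K × K) :=
  ((WithLp.prodContinuousLinearEquiv 2 ℂ K K).symm : K × K →L[ℂ] WithLp 2 (K × K)) ∘L
    ((0 : K × K →L[ℂ] K).prod (U ∘L fst ℂ K K)) ∘L
    ((WithLp.prodContinuousLinearEquiv 2 ℂ K K) : WithLp 2 (K × K) →L[ℂ] K × K)

/- ## Auxiliary lemmas -/

private lemma pairext {α β : Type*} (a b : WithLp 2 (α × β)) (h1 : a.fst = b.fst)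
    (h2 : a.snd = b.snd) : a = b := by
  cases a; cases b; exact congrArg (WithLp.toLp 2) (Prod.ext h1 h2)

private lemma unitary_isom {K : Type*} [NormedAddCommGroup K] [InnerProductSpace ℂ K]
    [CompleteSpace K] {u : K →L[ℂ] K} (hu : u ∈ unitary (K →L[ℂ] K)) (x : K) :
    ‖u x‖ = ‖x‖ := by
  have h1 : star u * u = 1 := hu.1
  have h2 : ‖u x‖ ^ 2 = ‖x‖ ^ 2 := by
    rw [← inner_self_eq_norm_sq (𝕜 := ℂ), ← inner_self_eq_norm_sq (𝕜 := ℂ)]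
    have h3 : (inner ℂ (u x) (u x) : ℂ) = inner ℂ ((star u * u) x) x := by
      rw [ContinuousLinearMap.mul_apply, ContinuousLinearMap.star_eq_adjoint,
        ContinuousLinearMap.adjoint_inner_left]
    rw [h1] at h3
    rw [h3]; rfl
  nlinarith [norm_nonneg (u x), norm_nonneg x]

private lemma blockOp_apply' {H M : Type*} [NormedAddCommGroup H] [InnerProductSpace ℂ H]
    [NormedAddCommGroup M] [InnerProductSpace ℂ M]
    (T : H →L[ℂ] H) (A : M →L[ℂ] H) (B : M →L[ℂ] M) (x : WithLp 2 (H × M)) :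
    blockOp T A B x = WithLp.toLp 2 ((T x.fst + A x.snd, B x.snd) : H × M) := rfl

private lemma parrottOp_apply' {K : Type*} [NormedAddCommGroup K] [InnerProductSpace ℂ K]
    (U : K →L[ℂ] K) (y : WithLp 2 (K × K)) :
    parrottOp U y = WithLp.toLp 2 (((0 : K), U y.fst) : K × K) := rfl


universe u_aux
noncomputable instance myULiftInner : InnerProductSpace ℂ (ULift.{u_aux} ℂ) :=
  { (inferInstance : NormedSpace ℂ (ULift.{u_aux} ℂ)) with
    inner := fun x y => inner ℂ x.down y.down
    norm_sq_eq_re_inner := fun x => by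
      show ‖x‖ ^ 2 = RCLike.re (inner ℂ x.down x.down : ℂ)
      have e : ‖x‖ = ‖x.down‖ := rfl
      rw [e]
      exact norm_sq_eq_re_inner (𝕜 := ℂ) x.down
    conj_inner_symm := fun x y =>
      show (starRingEnd ℂ) (inner ℂ y.down x.down : ℂ) = (inner ℂ x.down y.down : ℂ) from
        inner_conj_symm _ _
    add_left := fun x y z => by
      show (inner ℂ ((x + y).down) z.down : ℂ)
        = (inner ℂ x.down z.down : ℂ) + (inner ℂ y.down z.down : ℂ)
      have e : (x + y).down = x.down + y.down := rfl
      rw [e, inner_add_left]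
    smul_left := fun x y c => by
      show (inner ℂ ((c • x).down) y.down : ℂ) = (starRingEnd ℂ) c * (inner ℂ x.down y.down : ℂ)
      have e : (c • x).down = c • x.down := rfl
      rw [e, inner_smul_left] }

private noncomputable def upSpan {K : Type*} [NormedAddCommGroup K] [NormedSpace ℂ K] (x : K) :
    ULift.{u_aux} ℂ →L[ℂ] K :=
  (ContinuousLinearMap.toSpanSingleton ℂ x).comp
    ⟨ULift.moduleEquiv.toLinearMap, continuous_uliftDown⟩

private lemma upSpan_apply {K : Type*} [NormedAddCommGroup K] [NormedSpace ℂ K] (x : K)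
    (t : ULift.{u_aux} ℂ) : upSpan x t = t.down • x := by
  show ContinuousLinearMap.toSpanSingleton ℂ x t.down = t.down • x
  rw [ContinuousLinearMap.toSpanSingleton_apply]

private theorem fwd_dir {K : Type*} [NormedAddCommGroup K] [InnerProductSpace ℂ K]
    [CompleteSpace K] {n : ℕ} (U : Fin n → K →L[ℂ] K)
    (hU : ∀ i, U i ∈ unitary (K →L[ℂ] K))
    (W : Fin n → K →L[ℂ] K) (N : Fin n)
    (hW : ∀ j, W j = star (U N) * U j)
    (hext : ∀ (A : Fin n → ULift.{u_aux} ℂ →L[ℂ] WithLp 2 (K × K))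
        (B : Fin n → ULift.{u_aux} ℂ →L[ℂ] ULift.{u_aux} ℂ),
        (∀ i, ‖blockOp (parrottOp (U i)) (A i) (B i)‖ ≤ 1) →
        (∀ i j, blockOp (parrottOp (U i)) (A i) (B i) ∘L blockOp (parrottOp (U j)) (A j) (B j)
              = blockOp (parrottOp (U j)) (A j) (B j) ∘L blockOp (parrottOp (U i)) (A i) (B i)) →
        ∀ i, A i = 0) :
    (⨅ (i : Fin n) (j : Fin n), LinearMap.ker ((W i * W j - W j * W i : K →L[ℂ] K) : K →ₗ[ℂ] K)) = ⊥ := by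
  have hUst : ∀ (i : Fin n) (x : K), star (U i) (U i x) = x := by
    intro i x
    have h := ContinuousLinearMap.ext_iff.mp ((hU i).1) x
    simpa [ContinuousLinearMap.mul_apply] using h
  have hUst' : ∀ (i : Fin n) (x : K), U i (star (U i) x) = x := by
    intro i x
    have h := ContinuousLinearMap.ext_iff.mp ((hU i).2) x
    simpa [ContinuousLinearMap.mul_apply] using h
  have hWU : ∀ i, W i ∈ unitary (K →L[ℂ] K) := by
    intro i
    rw [hW]
    exact mul_mem (Unitary.star_mem (hU N)) (hU i)
  have hWapp : ∀ (j : Fin n) (x : K), W j x = star (U N) (U j x) := by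
    intro j x
    rw [hW j]
    rfl
  rw [Submodule.eq_bot_iff]
  intro v hv
  by_contra hv0
  have hvnorm : (0 : ℝ) < ‖v‖ := norm_pos_iff.mpr hv0
  obtain ⟨w, hwdef⟩ : ∃ w : K, w = ((‖v‖ : ℂ))⁻¹ • v := ⟨_, rfl⟩
  have hwnorm : ‖w‖ = 1 := by
    rw [hwdef, norm_smul, norm_inv]
    simp only [Complex.norm_real, Real.norm_eq_abs, abs_of_nonneg (le_of_lt hvnorm)]
    field_simp
  have hvc : ∀ i j, W i (W j v) = W j (W i v) := by
    intro i j
    have h1 : v ∈ LinearMap.ker ((W i * W j - W j * W i : K →L[ℂ] K) : K →ₗ[ℂ] K) := by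
      have h2 := Submodule.mem_iInf (fun i : Fin n =>
        ⨅ (j : Fin n), LinearMap.ker ((W i * W j - W j * W i : K →L[ℂ] K) : K →ₗ[ℂ] K)) |>.mp hv i
      exact Submodule.mem_iInf (fun j : Fin n =>
        LinearMap.ker ((W i * W j - W j * W i : K →L[ℂ] K) : K →ₗ[ℂ] K)) |>.mp h2 j
    have h3 := LinearMap.mem_ker.mp h1
    have h4 : (W i * W j) v - (W j * W i) v = 0 := h3
    have h5 := sub_eq_zero.mp h4
    simpa [ContinuousLinearMap.mul_apply] using h5
  have hwc : ∀ i j, W i (W j w) = W j (W i w) := by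
    intro i j
    simp only [hwdef, map_smul, hvc i j]
  have key : ∀ i j, U i (W j w) = U j (W i w) := by
    intro i j
    have e1 : ∀ (k l : Fin n), U k (W l w) = U N (W k (W l w)) := by
      intro k l
      rw [hWapp k, hUst' N]
    rw [e1 i j, e1 j i, hwc i j]
  -- the nontrivial extension
  have hAopapp : ∀ (i : Fin n) (t : ULift.{u_aux} ℂ),
      upSpan ((WithLp.equiv 2 (K × K)).symm (W i w, 0)) t
        = WithLp.toLp 2 ((t.down • W i w, (0 : K)) : K × K) := by
    intro i t
    rw [upSpan_apply]
    refine pairext _ _ ?_ ?_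
    · show t.down • W i w = t.down • W i w
      rfl
    · show t.down • (0 : K) = (0 : K)
      simp
  set Aop : Fin n → ULift.{u_aux} ℂ →L[ℂ] WithLp 2 (K × K) := fun i =>
    upSpan ((WithLp.equiv 2 (K × K)).symm (W i w, 0)) with hAop
  have hnorm : ∀ i, ‖blockOp (parrottOp (U i)) (Aop i)
      (0 : ULift.{u_aux} ℂ →L[ℂ] ULift.{u_aux} ℂ)‖ ≤ 1 := by
    intro i
    refine ContinuousLinearMap.opNorm_le_bound _ zero_le_one fun x => ?_
    rw [one_mul]
    have hb2 : ‖blockOp (parrottOp (U i)) (Aop i)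
        (0 : ULift.{u_aux} ℂ →L[ℂ] ULift.{u_aux} ℂ) x‖ ^ 2 ≤ ‖x‖ ^ 2 := by
      rw [blockOp_apply', WithLp.prod_norm_sq_eq_of_L2, WithLp.prod_norm_sq_eq_of_L2 x,
        WithLp.prod_norm_sq_eq_of_L2 x.fst]
      have c1 : (WithLp.toLp 2 ((parrottOp (U i) x.fst + Aop i x.snd,
          (0 : ULift.{u_aux} ℂ →L[ℂ] ULift.{u_aux} ℂ) x.snd) :
          WithLp 2 (K × K) × ULift.{u_aux} ℂ)).fst = parrottOp (U i) x.fst + Aop i x.snd := rfl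
      have c2 : (WithLp.toLp 2 ((parrottOp (U i) x.fst + Aop i x.snd,
          (0 : ULift.{u_aux} ℂ →L[ℂ] ULift.{u_aux} ℂ) x.snd) :
          WithLp 2 (K × K) × ULift.{u_aux} ℂ)).snd = (0 : ULift.{u_aux} ℂ) := rfl
      rw [c1, c2, WithLp.prod_norm_sq_eq_of_L2 (parrottOp (U i) x.fst + Aop i x.snd)]
      have c3 : (parrottOp (U i) x.fst + Aop i x.snd).fst = x.snd.down • W i w := by
        rw [parrottOp_apply', hAop]
        simp only
        rw [hAopapp]
        show (0 : K) + x.snd.down • W i w = x.snd.down • W i w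
        rw [zero_add]
      have c4 : (parrottOp (U i) x.fst + Aop i x.snd).snd = U i x.fst.fst := by
        rw [parrottOp_apply', hAop]
        simp only
        rw [hAopapp]
        show U i x.fst.fst + (0 : K) = U i x.fst.fst
        rw [add_zero]
      rw [c3, c4, norm_smul, unitary_isom (hWU i), hwnorm, unitary_isom (hU i)]
      have c5 : ‖x.snd.down‖ = ‖x.snd‖ := rfl
      rw [c5]
      simp only [norm_zero, mul_one]
      nlinarith [sq_nonneg ‖x.fst.snd‖]
    nlinarith [norm_nonneg (blockOp (parrottOp (U i)) (Aop i)
      (0 : ULift.{u_aux} ℂ →L[ℂ] ULift.{u_aux} ℂ) x), norm_nonneg x]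
  have hcomm : ∀ i j,
      blockOp (parrottOp (U i)) (Aop i) (0 : ULift.{u_aux} ℂ →L[ℂ] ULift.{u_aux} ℂ) ∘L
        blockOp (parrottOp (U j)) (Aop j) (0 : ULift.{u_aux} ℂ →L[ℂ] ULift.{u_aux} ℂ)
      = blockOp (parrottOp (U j)) (Aop j) (0 : ULift.{u_aux} ℂ →L[ℂ] ULift.{u_aux} ℂ) ∘L
        blockOp (parrottOp (U i)) (Aop i) (0 : ULift.{u_aux} ℂ →L[ℂ] ULift.{u_aux} ℂ) := by
    intro i j
    refine ContinuousLinearMap.ext fun x => ?_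
    rw [ContinuousLinearMap.comp_apply, ContinuousLinearMap.comp_apply]
    have hX : ∀ (k : Fin n) (y : WithLp 2 (WithLp 2 (K × K) × ULift.{u_aux} ℂ)),
        blockOp (parrottOp (U k)) (Aop k) (0 : ULift.{u_aux} ℂ →L[ℂ] ULift.{u_aux} ℂ) y
          = WithLp.toLp 2 (WithLp.toLp 2 ((y.snd.down • W k w, U k y.fst.fst) : K × K),
                (0 : ULift.{u_aux} ℂ)) := by
      intro k y
      rw [blockOp_apply']
      refine pairext _ _ ?_ ?_
      · show parrottOp (U k) y.fst + Aop k y.snd = _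
        rw [parrottOp_apply', hAop]
        simp only
        rw [hAopapp]
        refine pairext _ _ ?_ ?_
        · show (0 : K) + y.snd.down • W k w = y.snd.down • W k w
          rw [zero_add]
        · show U k y.fst.fst + (0 : K) = U k y.fst.fst
          rw [add_zero]
      · show (0 : ULift.{u_aux} ℂ →L[ℂ] ULift.{u_aux} ℂ) y.snd = (0 : ULift.{u_aux} ℂ)
        rfl
    rw [hX j x, hX i _, hX i x, hX j _]
    refine pairext _ _ ?_ rfl
    refine pairext _ _ ?_ ?_
    · show ((0 : ULift.{u_aux} ℂ)).down • W i w = ((0 : ULift.{u_aux} ℂ)).down • W j w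
      show (0 : ℂ) • W i w = (0 : ℂ) • W j w
      simp
    · show U i (x.snd.down • W j w) = U j (x.snd.down • W i w)
      rw [map_smul, map_smul, key i j]
  have hA0 := hext Aop (fun _ => (0 : ULift.{u_aux} ℂ →L[ℂ] ULift.{u_aux} ℂ)) hnorm hcomm N
  have h1 : Aop N (ULift.up 1) = 0 := by rw [hA0]; rfl
  rw [hAop] at h1
  simp only at h1
  rw [hAopapp] at h1
  have h2' : (1 : ℂ) • W N w = 0 := congrArg WithLp.fst h1
  rw [one_smul] at h2'
  have h3 : w = 0 := by
    have h4 : W N w = w := by rw [hWapp, hUst]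
    rwa [h4] at h2'
  rw [h3, norm_zero] at hwnorm
  exact one_ne_zero hwnorm.symm

/-- The Parrott tuple built from unitaries `U_1, …, U_n` is extremal if and only if
`⋂_{i,j} ker [U_n⁻¹U_i, U_n⁻¹U_j] = {0}`. -/
theorem statement3 {K : Type*} [NormedAddCommGroup K] [InnerProductSpace ℂ K] [CompleteSpace K]
    {n : ℕ} (hn : 1 ≤ n) (U : Fin n → K →L[ℂ] K)
    (hU : ∀ i, U i ∈ unitary (K →L[ℂ] K))
    (W : Fin n → K →L[ℂ] K)
    (hW : ∀ j, W j = star (U ⟨n - 1, by omega⟩) * U j) :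
    IsExtremal (fun i => parrottOp (U i)) ↔
      (⨅ (i : Fin n) (j : Fin n), LinearMap.ker ((W i * W j - W j * W i : K →L[ℂ] K) : K →ₗ[ℂ] K)) = ⊥ := by
  set N : Fin n := ⟨n - 1, by omega⟩ with hNdef
  have hUst : ∀ (i : Fin n) (x : K), star (U i) (U i x) = x := by
    intro i x
    have h := ContinuousLinearMap.ext_iff.mp ((hU i).1) x
    simpa [ContinuousLinearMap.mul_apply] using h
  have hUst' : ∀ (i : Fin n) (x : K), U i (star (U i) x) = x := by
    intro i x
    have h := ContinuousLinearMap.ext_iff.mp ((hU i).2) x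
    simpa [ContinuousLinearMap.mul_apply] using h
  have hWapp : ∀ (j : Fin n) (x : K), W j x = star (U N) (U j x) := by
    intro j x
    rw [hW j]
    rfl
  constructor
  · -- extremal → ⨅ = ⊥
    intro hext
    exact fwd_dir U hU W N hW (fun A B h1 h2 => hext (ULift ℂ) A B h1 h2)
  · -- ⨅ = ⊥ → extremal
    intro hbot
    intro M _ _ _ A B hnorm hcomm i
    -- component lemma for the block operators
    have hX12 : ∀ (k : Fin n) (y : WithLp 2 (WithLp 2 (K × K) × M)),
        (blockOp (parrottOp (U k)) (A k) (B k) y).fst.snd = U k y.fst.fst + (A k y.snd).snd := fun _ _ => rfl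
    have hX11 : ∀ (k : Fin n) (y : WithLp 2 (WithLp 2 (K × K) × M)),
        (blockOp (parrottOp (U k)) (A k) (B k) y).fst.fst = (A k y.snd).fst := by
      intro k y
      show (0 : K) + (A k y.snd).fst = (A k y.snd).fst
      rw [zero_add]
    have hX2 : ∀ (k : Fin n) (y : WithLp 2 (WithLp 2 (K × K) × M)),
        (blockOp (parrottOp (U k)) (A k) (B k) y).snd = B k y.snd := fun _ _ => rfl
    -- Step A: the second component of A is zero
    have hineq : ∀ (k : Fin n) (h1 : K) (m : M),
        ‖(A k m).fst‖ ^ 2 + ‖U k h1 + (A k m).snd‖ ^ 2 + ‖B k m‖ ^ 2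
          ≤ ‖h1‖ ^ 2 + ‖m‖ ^ 2 := by
      intro k h1 m
      obtain ⟨x, hxdef⟩ : ∃ x : WithLp 2 (WithLp 2 (K × K) × M),
          x = (WithLp.equiv 2 _).symm ((WithLp.equiv 2 (K × K)).symm (h1, 0), m) := ⟨_, rfl⟩
      have hle : ‖blockOp (parrottOp (U k)) (A k) (B k) x‖ ≤ ‖x‖ := by
        calc ‖blockOp (parrottOp (U k)) (A k) (B k) x‖
            ≤ ‖blockOp (parrottOp (U k)) (A k) (B k)‖ * ‖x‖ :=
              ContinuousLinearMap.le_opNorm _ _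
          _ ≤ 1 * ‖x‖ := mul_le_mul_of_nonneg_right (hnorm k) (norm_nonneg x)
          _ = ‖x‖ := one_mul _
      have hsq : ‖blockOp (parrottOp (U k)) (A k) (B k) x‖ ^ 2 ≤ ‖x‖ ^ 2 := by
        nlinarith [norm_nonneg (blockOp (parrottOp (U k)) (A k) (B k) x), norm_nonneg x]
      rw [WithLp.prod_norm_sq_eq_of_L2, WithLp.prod_norm_sq_eq_of_L2 x,
        WithLp.prod_norm_sq_eq_of_L2 (blockOp (parrottOp (U k)) (A k) (B k) x).fst,
        WithLp.prod_norm_sq_eq_of_L2 x.fst] at hsq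
      have e1 : x.fst.fst = h1 := by rw [hxdef]; rfl
      have e2 : x.fst.snd = (0 : K) := by rw [hxdef]; rfl
      have e3 : x.snd = m := by rw [hxdef]; rfl
      rw [hX11 k x, hX12 k x, hX2 k x, e1, e2, e3] at hsq
      simpa [norm_zero] using hsq
    have hA2 : ∀ (k : Fin n) (m : M), (A k m).snd = 0 := by
      intro k m
      by_contra hc
      have hcpos : (0 : ℝ) < ‖(A k m).snd‖ := norm_pos_iff.mpr hc
      set c : K := (A k m).snd with hcdef
      set t : ℝ := ‖m‖ ^ 2 / ‖c‖ ^ 2 with htdef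
      have ht0 : 0 ≤ t := by positivity
      have htc : t * ‖c‖ ^ 2 = ‖m‖ ^ 2 := by
        rw [htdef]
        field_simp
      have h := hineq k ((t : ℂ) • star (U k) c) m
      have e1 : U k ((t : ℂ) • star (U k) c) = (t : ℂ) • c := by
        rw [map_smul, hUst']
      rw [e1, ← hcdef] at h
      have e2 : (t : ℂ) • c + c = ((t : ℂ) + 1) • c := by
        rw [add_smul, one_smul]
      rw [e2, norm_smul, norm_smul] at h
      have e3 : ‖((t : ℂ) + 1)‖ = t + 1 := by
        rw [show ((t : ℂ) + 1) = (((t + 1 : ℝ)) : ℂ) by push_cast; ring]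
        rw [Complex.norm_real, Real.norm_eq_abs, abs_of_nonneg (by linarith : (0:ℝ) ≤ t + 1)]
      have e4 : ‖((t : ℝ) : ℂ)‖ = t := by
        rw [Complex.norm_real, Real.norm_eq_abs, abs_of_nonneg ht0]
      have e5 : ‖star (U k) c‖ = ‖c‖ := unitary_isom (Unitary.star_mem (hU k)) c
      rw [e3, e4, e5] at h
      nlinarith [sq_nonneg ‖(A k m).fst‖, sq_nonneg ‖B k m‖, hcpos, htc]
    -- Step B: the commutation relations
    have hrel : ∀ (k l : Fin n) (m : M), U k ((A l m).fst) = U l ((A k m).fst) := by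
      intro k l m
      obtain ⟨x0, hx0⟩ : ∃ x0 : WithLp 2 (WithLp 2 (K × K) × M),
          x0 = (WithLp.equiv 2 _).symm ((0 : WithLp 2 (K × K)), m) := ⟨_, rfl⟩
      have h0 := ContinuousLinearMap.ext_iff.mp (hcomm k l) x0
      rw [ContinuousLinearMap.comp_apply, ContinuousLinearMap.comp_apply] at h0
      have h1 := congrArg (fun y : WithLp 2 (WithLp 2 (K × K) × M) => y.fst.snd) h0
      simp only at h1
      rw [hX12 k, hX12 l, hX11 k x0, hX11 l x0, hX2 k x0, hX2 l x0] at h1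
      have e0 : x0.snd = m := by rw [hx0]; rfl
      have e1 : x0.fst.fst = (0 : K) := by rw [hx0]; rfl
      rw [e0, hA2 k (B l m), hA2 l (B k m), add_zero, add_zero] at h1
      exact h1
    -- Step C: conclude
    have hAN : ∀ m : M, (A N m).fst = 0 := by
      intro m
      set v : K := (A N m).fst with hvdef
      have hker : ∀ k l : Fin n, (W k * W l - W l * W k) v = 0 := by
        intro k l
        have hWv : ∀ j : Fin n, W j v = (A j m).fst := by
          intro j
          rw [hWapp, hvdef, hrel j N, hUst]
        have h1 : (W k * W l) v = (W l * W k) v := by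
          show W k (W l v) = W l (W k v)
          rw [hWv l, hWv k, hWapp k, hWapp l, hrel k l]
        show (W k * W l) v - (W l * W k) v = 0
        rw [h1, sub_self]
      have hmem : v ∈ (⨅ (k : Fin n) (l : Fin n),
          LinearMap.ker ((W k * W l - W l * W k : K →L[ℂ] K) : K →ₗ[ℂ] K)) := by
        refine Submodule.mem_iInf _ |>.mpr fun k => ?_
        refine Submodule.mem_iInf _ |>.mpr fun l => ?_
        exact LinearMap.mem_ker.mpr (hker k l)
      rw [hbot] at hmem
      exact (Submodule.mem_bot ℂ).mp hmem
    have hA1 : ∀ m : M, (A i m).fst = 0 := by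
      intro m
      have h1 := hrel i N m
      rw [hAN m, map_zero] at h1
      have h2 : star (U N) (U N ((A i m).fst)) = star (U N) 0 := by rw [← h1]
      rw [hUst, map_zero] at h2
      exact h2
    refine ContinuousLinearMap.ext fun m => ?_
    refine pairext _ _ ?_ ?_
    · show (A i m).fst = (0 : K)
      exact hA1 m
    · show (A i m).snd = (0 : K)
      exact hA2 i m
end

section
/- Let n ≥ 1 and let U_1, …, U_n be unitary operators on a complex Hilbert space K. For k ∈ {1, …, n} let N_k denote the intersection over all i, j = 1, …, n of the kernels of the commutators (U_k⁻¹U_i)(U_k⁻¹U_j) − (U_k⁻¹U_j)(U_k⁻¹U_i). Then for any k, l ∈ {1, …, n}, N_k = {0} if and only if N_l = {0}. -/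
/-- For unitaries `U_1, …, U_n` on a Hilbert space `K`, and
`N_k = ⋂_{i,j} ker [U_k⁻¹U_i, U_k⁻¹U_j]`, one has `N_k = {0}` iff `N_l = {0}`. -/
theorem statement4 {K : Type*} [NormedAddCommGroup K] [InnerProductSpace ℂ K] [CompleteSpace K]
    {n : ℕ} (hn : 1 ≤ n) (U : Fin n → K →L[ℂ] K)
    (hU : ∀ i, U i ∈ unitary (K →L[ℂ] K))
    (N : Fin n → Submodule ℂ K)
    (hN : ∀ k, N k = ⨅ (i : Fin n) (j : Fin n),
      LinearMap.ker (((star (U k) * U i) * (star (U k) * U j)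
                   - (star (U k) * U j) * (star (U k) * U i) : K →L[ℂ] K) : K →ₗ[ℂ] K))
    (k l : Fin n) :
    N k = ⊥ ↔ N l = ⊥ := by
  have star_apply : ∀ (m : Fin n) (x : K), star (U m) ((U m) x) = x := by
    intro m x
    have h := (Unitary.mem_iff.mp (hU m)).1
    calc star (U m) ((U m) x) = (star (U m) * U m) x := rfl
      _ = x := by rw [h]; rfl
  have apply_star : ∀ (m : Fin n) (x : K), (U m) (star (U m) x) = x := by
    intro m x
    have h := (Unitary.mem_iff.mp (hU m)).2
    calc (U m) (star (U m) x) = (U m * star (U m)) x := rfl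
      _ = x := by rw [h]; rfl
  have mem_iff : ∀ (m : Fin n) (x : K), x ∈ N m ↔
      ∀ i j : Fin n, (U i) (star (U m) ((U j) x)) = (U j) (star (U m) ((U i) x)) := by
    intro m x
    rw [hN m]
    simp only [Submodule.mem_iInf, LinearMap.mem_ker, ContinuousLinearMap.coe_coe, ContinuousLinearMap.coe_sub',
      Pi.sub_apply, ContinuousLinearMap.mul_apply, sub_eq_zero]
    constructor
    · intro h i j
      have := h i j
      have h2 := congrArg (U m) this
      rwa [apply_star, apply_star] at h2
    · intro h i j
      rw [h i j]
  have key : ∀ (k l : Fin n) (x : K), x ∈ N l → star (U l) ((U k) x) ∈ N k := by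
    intro k l x hx
    rw [mem_iff] at hx ⊢
    intro i j
    have Rj : ∀ j, (U k) (star (U l) ((U j) x)) = (U j) (star (U l) ((U k) x)) :=
      fun j => hx k j
    rw [← Rj j, ← Rj i, star_apply, star_apply]
    exact hx i j
  have main : ∀ (k l : Fin n), N k = ⊥ → N l = ⊥ := by
    intro k l h
    rw [Submodule.eq_bot_iff] at h ⊢
    intro x hx
    have h0 : star (U l) ((U k) x) = 0 := h _ (key k l x hx)
    have h1 : (U k) x = 0 := by
      have := congrArg (U l) h0
      rwa [apply_star, map_zero] at this
    have h2 := star_apply k x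
    rw [h1, map_zero] at h2
    exact h2.symm
  exact ⟨main k l, main l k⟩
end

section
/- For i = 1, 2, 3 let T_i be the Crabb–Davie 8×8 complex matrix. Then the matrices T_1, T_2, T_3 pairwise commute, and for each i, T_i T_i* = diag(0, δ_{i1}, δ_{i2}, δ_{i3}, 1, 1, 1, 1) (the diagonal matrix with those diagonal entries); in particular each T_i is a partial isometry and a contraction. -/
open Matrix
/-- Kronecker delta on `Fin 3`. -/
def kd (i j : Fin 3) : ℂ := if i = j then 1 else 0

/-- The Crabb–Davie `8×8` matrices (rows and columns indexed `0,…,7`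
corresponding to `1,…,8` in the paper). -/
def cdMatrix (i : Fin 3) : Matrix (Fin 8) (Fin 8) ℂ :=
  !![0,      0,       0,       0,       0,      0,      0,      0;
     kd i 0, 0,       0,       0,       0,      0,      0,      0;
     kd i 1, 0,       0,       0,       0,      0,      0,      0;
     kd i 2, 0,       0,       0,       0,      0,      0,      0;
     0,     -kd i 0,  kd i 2,  kd i 1,  0,      0,      0,      0;
     0,      kd i 2, -kd i 1,  kd i 0,  0,      0,      0,      0;
     0,      kd i 1,  kd i 0, -kd i 2,  0,      0,      0,      0;
     0,      0,       0,       0,       kd i 0, kd i 1, kd i 2, 0]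

/-!
Writing `p = a a*` for an element `a` of a C*-ring, `b = p a - a` satisfies
`b b* = p³ - 2p² + p`, so `p` idempotent forces `b = 0` (`a` is a partial isometry), and then
`‖a‖² = ‖p‖ ≤ 1` since `p` is a projection. For the Crabb–Davie matrices `T T*` is diagonal with
`0/1` entries, hence idempotent. All entries are integers, so the matrix identities are checked
by kernel computation over `ℤ` and transported along `Int.castRingHom ℂ`.
-/

section CStarRing

variable {E : Type*} [NonUnitalNormedRing E] [StarRing E] [CStarRing E] {a : E}

theorem mul_star_mul_self_eq_self_of_isIdempotentElem (h : IsIdempotentElem (a * star a)) :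
    a * star a * a = a := by
  set p := a * star a with hp
  have key : (p * a - a) * star (p * a - a) = 0 :=
    calc _ = p * p * p - p * p - p * p + p := by
          simp only [star_sub, star_mul, star_star, hp]
          noncomm_ring
      _ = 0 := by simp only [h.eq, sub_self, zero_sub, neg_add_cancel]
  exact sub_eq_zero.mp ((CStarRing.mul_star_self_eq_zero_iff _).mp key)

theorem norm_le_one_of_isIdempotentElem_mul_star (h : IsIdempotentElem (a * star a)) :
    ‖a‖ ≤ 1 := by
  have hsq : ‖a‖ * ‖a‖ ≤ 1 :=
    CStarRing.norm_self_mul_star (x := a) ▸ IsStarProjection.norm_le _ ⟨h, .mul_star_self a⟩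
  nlinarith [norm_nonneg a]

end CStarRing

namespace Matrix

theorem isIdempotentElem_diagonal {n R : Type*} [Fintype n] [DecidableEq n] [Semiring R]
    {d : n → R} (hd : ∀ m, IsIdempotentElem (d m)) : IsIdempotentElem (diagonal d) := by
  rw [IsIdempotentElem, diagonal_mul_diagonal]
  exact congrArg diagonal (funext hd)

variable {𝕜 n : Type*} [RCLike 𝕜] [Fintype n] [DecidableEq n] {M : Matrix n n 𝕜}

theorem isIdempotentElem_toEuclideanCLM_mul_star (h : IsIdempotentElem (M * Mᴴ)) :
    IsIdempotentElem (toEuclideanCLM (𝕜 := 𝕜) M * star (toEuclideanCLM (𝕜 := 𝕜) M)) := by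
  rw [← map_star, ← map_mul]
  exact h.map _

theorem mul_conjTranspose_mul_self_eq_self_of_isIdempotentElem
    (h : IsIdempotentElem (M * Mᴴ)) : M * Mᴴ * M = M := by
  have h' := mul_star_mul_self_eq_self_of_isIdempotentElem
    (isIdempotentElem_toEuclideanCLM_mul_star h)
  rw [← map_star, ← map_mul, ← map_mul] at h'
  exact toEuclideanCLM.injective h'

theorem norm_toEuclideanCLM_le_one_of_isIdempotentElem (h : IsIdempotentElem (M * Mᴴ)) :
    ‖toEuclideanCLM (𝕜 := 𝕜) M‖ ≤ 1 :=
  norm_le_one_of_isIdempotentElem_mul_star (isIdempotentElem_toEuclideanCLM_mul_star h)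

end Matrix

def kdInt (i j : Fin 3) : ℤ := if i = j then 1 else 0

def cdMatrixInt (i : Fin 3) : Matrix (Fin 8) (Fin 8) ℤ :=
  !![0,         0,          0,          0,          0,         0,         0,         0;
     kdInt i 0, 0,          0,          0,          0,         0,         0,         0;
     kdInt i 1, 0,          0,          0,          0,         0,         0,         0;
     kdInt i 2, 0,          0,          0,          0,         0,         0,         0;
     0,        -kdInt i 0,  kdInt i 2,  kdInt i 1,  0,         0,         0,         0;
     0,         kdInt i 2, -kdInt i 1,  kdInt i 0,  0,         0,         0,         0;
     0,         kdInt i 1,  kdInt i 0, -kdInt i 2,  0,         0,         0,         0;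
     0,         0,          0,          0,          kdInt i 0, kdInt i 1, kdInt i 2, 0]

theorem cast_kdInt (i j : Fin 3) : (kdInt i j : ℂ) = kd i j := by
  unfold kd kdInt
  split_ifs <;> simp

theorem isIdempotentElem_kd (i j : Fin 3) : IsIdempotentElem (kd i j) := by
  unfold kd
  split_ifs
  exacts [.one, .zero]

theorem cdMatrixInt_mul_comm (i j : Fin 3) :
    cdMatrixInt i * cdMatrixInt j = cdMatrixInt j * cdMatrixInt i := by
  fin_cases i <;> fin_cases j <;> decide

theorem cdMatrixInt_mul_transpose (i : Fin 3) :
    cdMatrixInt i * (cdMatrixInt i)ᵀ =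
      diagonal ![0, kdInt i 0, kdInt i 1, kdInt i 2, 1, 1, 1, 1] := by
  fin_cases i <;> decide

theorem cdMatrix_eq_map (i : Fin 3) : cdMatrix i = (cdMatrixInt i).map (Int.castRingHom ℂ) := by
  ext a b
  fin_cases a <;> fin_cases b <;> simp [cdMatrix, cdMatrixInt, cast_kdInt]

theorem conjTranspose_cdMatrix (i : Fin 3) :
    (cdMatrix i)ᴴ = (cdMatrixInt i)ᵀ.map (Int.castRingHom ℂ) := by
  rw [cdMatrix_eq_map, ← conjTranspose_map _ (fun _ => by simp),
    conjTranspose_eq_transpose_of_trivial]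

theorem cdMatrix_mul_comm (i j : Fin 3) : cdMatrix i * cdMatrix j = cdMatrix j * cdMatrix i := by
  rw [cdMatrix_eq_map, cdMatrix_eq_map, ← Matrix.map_mul, ← Matrix.map_mul, cdMatrixInt_mul_comm]

theorem cdMatrix_mul_conjTranspose (i : Fin 3) :
    cdMatrix i * (cdMatrix i)ᴴ = diagonal ![0, kd i 0, kd i 1, kd i 2, 1, 1, 1, 1] := by
  rw [conjTranspose_cdMatrix, cdMatrix_eq_map, ← Matrix.map_mul, cdMatrixInt_mul_transpose,
    diagonal_map (map_zero _)]
  congr 1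
  ext m
  fin_cases m <;> simp [cast_kdInt]

theorem isIdempotentElem_cdMatrix_mul_conjTranspose (i : Fin 3) :
    IsIdempotentElem (cdMatrix i * (cdMatrix i)ᴴ) := by
  rw [cdMatrix_mul_conjTranspose]
  refine isIdempotentElem_diagonal fun m => ?_
  fin_cases m <;> first | exact .zero | exact .one | exact isIdempotentElem_kd i _

/-- The Crabb–Davie matrices pairwise commute, satisfy
`T_i T_i* = diag(0, δ_{i1}, δ_{i2}, δ_{i3}, 1, 1, 1, 1)`; in particular each is a
partial isometry and a contraction. -/
theorem statement6 :
    (∀ i j : Fin 3, cdMatrix i * cdMatrix j = cdMatrix j * cdMatrix i) ∧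
    (∀ i : Fin 3, cdMatrix i * (cdMatrix i)ᴴ =
      Matrix.diagonal ![0, kd i 0, kd i 1, kd i 2, 1, 1, 1, 1]) ∧
    (∀ i : Fin 3, cdMatrix i * (cdMatrix i)ᴴ * cdMatrix i = cdMatrix i) ∧
    (∀ i : Fin 3, ‖Matrix.toEuclideanCLM (𝕜 := ℂ) (cdMatrix i)‖ ≤ 1) :=
  ⟨cdMatrix_mul_comm, cdMatrix_mul_conjTranspose,
    fun i => mul_conjTranspose_mul_self_eq_self_of_isIdempotentElem
      (isIdempotentElem_cdMatrix_mul_conjTranspose i),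
    fun i => norm_toEuclideanCLM_le_one_of_isIdempotentElem
      (isIdempotentElem_cdMatrix_mul_conjTranspose i)⟩
end

section
/- Let T_1, T_2, T_3 be the Crabb–Davie 8×8 complex matrices, viewed as operators on the Hilbert space ℂ⁸. Then the triple (T_1, T_2, T_3) is extremal: for every complex Hilbert space M and all bounded linear operators A_i : M → ℂ⁸ and B_i : M → M (i = 1, 2, 3) such that the block operators X_i on ℂ⁸ ⊕ M defined by X_i (h, m) = (T_i h + A_i m, B_i m) are contractions and pairwise commute, one has A_1 = A_2 = A_3 = 0. -/
open Matrix

namespace ContinuousLinearMap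

variable {𝕜 E : Type*} [RCLike 𝕜] [NormedAddCommGroup E] [InnerProductSpace 𝕜 E] [CompleteSpace E]

lemma adjoint_apply_apply_of_norm_apply_eq {X : E →L[𝕜] E} (hX : ‖X‖ ≤ 1) {u : E}
    (hu : ‖X u‖ = ‖u‖) : adjoint X (X u) = u := by
  have h_adj : ‖adjoint X (X u)‖ ≤ ‖u‖ :=
    calc ‖adjoint X (X u)‖ ≤ ‖adjoint X‖ * ‖X u‖ := le_opNorm _ _
      _ ≤ 1 * ‖u‖ := by rw [LinearIsometryEquiv.norm_map, hu]; gcongr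
      _ = ‖u‖ := one_mul _
  have h_inner : inner 𝕜 (adjoint X (X u)) u = (‖u‖ ^ 2 : 𝕜) := by
    rw [adjoint_inner_left, inner_self_eq_norm_sq_to_K, hu]
  rw [← sub_eq_zero, ← norm_eq_zero, ← sq_nonpos_iff, norm_sub_sq (𝕜 := 𝕜), h_inner,
    ← RCLike.ofReal_pow, RCLike.ofReal_re]
  nlinarith [norm_nonneg (adjoint X (X u))]

lemma inner_apply_apply_of_norm_apply_eq {X : E →L[𝕜] E} (hX : ‖X‖ ≤ 1) {u : E}
    (hu : ‖X u‖ = ‖u‖) (w : E) : inner 𝕜 (X u) (X w) = inner 𝕜 u w := by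
  rw [← adjoint_inner_left, adjoint_apply_apply_of_norm_apply_eq hX hu]

end ContinuousLinearMap

section BlockOp

open WithLp ContinuousLinearMap

variable {H M : Type*} [NormedAddCommGroup H] [InnerProductSpace ℂ H]
  [NormedAddCommGroup M] [InnerProductSpace ℂ M]

lemma blockOp_toLp (T : H →L[ℂ] H) (A : M →L[ℂ] H) (B : M →L[ℂ] M) (h : H) (m : M) :
    blockOp T A B (toLp 2 (h, m)) = toLp 2 (T h + A m, B m) := rfl

lemma inner_apply_eq_zero_of_norm_blockOp_le_one [CompleteSpace H] [CompleteSpace M]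
    {T : H →L[ℂ] H} {A : M →L[ℂ] H} {B : M →L[ℂ] M} (hX : ‖blockOp T A B‖ ≤ 1) {h : H}
    (hh : ‖T h‖ = ‖h‖) (m : M) : inner ℂ (T h) (A m) = 0 := by
  have hu : ‖blockOp T A B (toLp 2 (h, 0))‖ = ‖toLp 2 (h, (0 : M))‖ := by
    simpa [blockOp_toLp] using hh
  simpa [blockOp_toLp, prod_inner_apply] using
    inner_apply_apply_of_norm_apply_eq hX hu (toLp 2 (0, m))

lemma blockOp_comp_comm_fst {T₁ T₂ : H →L[ℂ] H} {A₁ A₂ : M →L[ℂ] H} {B₁ B₂ : M →L[ℂ] M}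
    (hcomm : blockOp T₁ A₁ B₁ ∘L blockOp T₂ A₂ B₂ = blockOp T₂ A₂ B₂ ∘L blockOp T₁ A₁ B₁)
    (m : M) : T₁ (A₂ m) + A₁ (B₂ m) = T₂ (A₁ m) + A₂ (B₁ m) := by
  simpa [blockOp_toLp] using congr(($hcomm (toLp 2 (0, m))).fst)

end BlockOp

lemma EuclideanSpace.apply_eq_zero_of_norm_blockOp_le_one {ι M : Type*} [Fintype ι]
    [DecidableEq ι] [NormedAddCommGroup M] [InnerProductSpace ℂ M] [CompleteSpace M]
    {T : EuclideanSpace ℂ ι →L[ℂ] EuclideanSpace ℂ ι} {A : M →L[ℂ] EuclideanSpace ℂ ι}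
    {B : M →L[ℂ] M} (hX : ‖blockOp T A B‖ ≤ 1) {k l : ι} {s : ℂ} (hs : ‖s‖ = 1)
    (hT : T (EuclideanSpace.single k s) = EuclideanSpace.single l 1) (m : M) : A m l = 0 := by
  have hh : ‖T (EuclideanSpace.single k s)‖ = ‖EuclideanSpace.single k s‖ := by
    simp [hT, hs]
  simpa [hT, EuclideanSpace.inner_single_left] using
    inner_apply_eq_zero_of_norm_blockOp_le_one hX hh m

noncomputable def crabbDavie (i : Fin 3) : EuclideanSpace ℂ (Fin 8) →L[ℂ] EuclideanSpace ℂ (Fin 8) :=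
  Matrix.toEuclideanCLM (𝕜 := ℂ) (cdMatrix i)

section CrabbDavie

variable (v : EuclideanSpace ℂ (Fin 8))

lemma crabbDavie_zero_apply : crabbDavie 0 v = !₂[0, v 0, 0, 0, -v 1, v 3, v 2, v 4] := by
  ext r
  fin_cases r <;> simp [crabbDavie, cdMatrix, kd, Matrix.mulVec, dotProduct, Fin.sum_univ_eight]

lemma crabbDavie_one_apply : crabbDavie 1 v = !₂[0, 0, v 0, 0, v 3, -v 2, v 1, v 5] := by
  ext r
  fin_cases r <;> simp [crabbDavie, cdMatrix, kd, Matrix.mulVec, dotProduct, Fin.sum_univ_eight]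

lemma crabbDavie_two_apply : crabbDavie 2 v = !₂[0, 0, 0, v 0, v 2, v 1, -v 3, v 6] := by
  ext r
  fin_cases r <;> simp [crabbDavie, cdMatrix, kd, Matrix.mulVec, dotProduct, Fin.sum_univ_eight]

variable {M : Type*} [NormedAddCommGroup M] [InnerProductSpace ℂ M] [CompleteSpace M]
  {A : M →L[ℂ] EuclideanSpace ℂ (Fin 8)} {B : M →L[ℂ] M}

open EuclideanSpace

lemma apply_eq_zero_of_norm_blockOp_crabbDavie_zero_le_one
    (hX : ‖blockOp (crabbDavie 0) A B‖ ≤ 1) (m : M) :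
    A m 1 = 0 ∧ A m 4 = 0 ∧ A m 5 = 0 ∧ A m 6 = 0 ∧ A m 7 = 0 := by
  refine ⟨apply_eq_zero_of_norm_blockOp_le_one hX (k := 0) (s := 1) ?_ ?_ m,
    apply_eq_zero_of_norm_blockOp_le_one hX (k := 1) (s := -1) ?_ ?_ m,
    apply_eq_zero_of_norm_blockOp_le_one hX (k := 3) (s := 1) ?_ ?_ m,
    apply_eq_zero_of_norm_blockOp_le_one hX (k := 2) (s := 1) ?_ ?_ m,
    apply_eq_zero_of_norm_blockOp_le_one hX (k := 4) (s := 1) ?_ ?_ m⟩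
  all_goals first | simp | ext r; fin_cases r <;> simp [crabbDavie_zero_apply]

lemma apply_eq_zero_of_norm_blockOp_crabbDavie_one_le_one
    (hX : ‖blockOp (crabbDavie 1) A B‖ ≤ 1) (m : M) :
    A m 2 = 0 ∧ A m 4 = 0 ∧ A m 5 = 0 ∧ A m 6 = 0 ∧ A m 7 = 0 := by
  refine ⟨apply_eq_zero_of_norm_blockOp_le_one hX (k := 0) (s := 1) ?_ ?_ m,
    apply_eq_zero_of_norm_blockOp_le_one hX (k := 3) (s := 1) ?_ ?_ m,
    apply_eq_zero_of_norm_blockOp_le_one hX (k := 2) (s := -1) ?_ ?_ m,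
    apply_eq_zero_of_norm_blockOp_le_one hX (k := 1) (s := 1) ?_ ?_ m,
    apply_eq_zero_of_norm_blockOp_le_one hX (k := 5) (s := 1) ?_ ?_ m⟩
  all_goals first | simp | ext r; fin_cases r <;> simp [crabbDavie_one_apply]

lemma apply_eq_zero_of_norm_blockOp_crabbDavie_two_le_one
    (hX : ‖blockOp (crabbDavie 2) A B‖ ≤ 1) (m : M) :
    A m 3 = 0 ∧ A m 4 = 0 ∧ A m 5 = 0 ∧ A m 6 = 0 ∧ A m 7 = 0 := by
  refine ⟨apply_eq_zero_of_norm_blockOp_le_one hX (k := 0) (s := 1) ?_ ?_ m,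
    apply_eq_zero_of_norm_blockOp_le_one hX (k := 2) (s := 1) ?_ ?_ m,
    apply_eq_zero_of_norm_blockOp_le_one hX (k := 1) (s := 1) ?_ ?_ m,
    apply_eq_zero_of_norm_blockOp_le_one hX (k := 3) (s := -1) ?_ ?_ m,
    apply_eq_zero_of_norm_blockOp_le_one hX (k := 6) (s := 1) ?_ ?_ m⟩
  all_goals first | simp | ext r; fin_cases r <;> simp [crabbDavie_two_apply]

end CrabbDavie

section Extension

variable {M : Type*} [NormedAddCommGroup M] [InnerProductSpace ℂ M] [CompleteSpace M]
  {A : Fin 3 → M →L[ℂ] EuclideanSpace ℂ (Fin 8)} {B : Fin 3 → M →L[ℂ] M}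
  (hX : ∀ i, ‖blockOp (crabbDavie i) (A i) (B i)‖ ≤ 1)
  (hAB : ∀ i j m, crabbDavie i (A j m) + A i (B j m) = crabbDavie j (A i m) + A j (B i m))
include hX hAB

lemma crabbDavie_extension_middle_rows (m : M) :
    A 0 m 2 = 0 ∧ A 0 m 3 = 0 ∧ A 1 m 1 = 0 ∧ A 1 m 3 = 0 ∧ A 2 m 1 = 0 ∧ A 2 m 2 = 0 := by
  have r0 := apply_eq_zero_of_norm_blockOp_crabbDavie_zero_le_one (hX 0)
  have r1 := apply_eq_zero_of_norm_blockOp_crabbDavie_one_le_one (hX 1)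
  have r2 := apply_eq_zero_of_norm_blockOp_crabbDavie_two_le_one (hX 2)
  have hcoord (i j : Fin 3) (k : Fin 8) := congr(($(hAB i j m)) k)
  have h014 := hcoord 0 1 4
  have h125 := hcoord 1 2 5
  have h026 := hcoord 0 2 6
  have h015 := hcoord 0 1 5
  have h024 := hcoord 0 2 4
  have h126 := hcoord 1 2 6
  simp only [crabbDavie_zero_apply, crabbDavie_one_apply, crabbDavie_two_apply, PiLp.add_apply,
    cons_val, r0, r1, r2, add_zero] at h014 h125 h026 h015 h024 h126
  have a11 : A 1 m 1 = 0 := by linear_combination -(h014 + h125 + h026) / 2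
  have a13 : A 1 m 3 = 0 := by linear_combination (h015 + h024 + h126) / 2
  exact ⟨by linear_combination h015 - a13, by linear_combination -h014 - a11, a11, a13,
    by linear_combination h126 - a13, by linear_combination -h125 - a11⟩

lemma crabbDavie_extension_eq_zero (i : Fin 3) : A i = 0 := by
  have mid := crabbDavie_extension_middle_rows hX hAB
  have r0 := apply_eq_zero_of_norm_blockOp_crabbDavie_zero_le_one (hX 0)
  have r1 := apply_eq_zero_of_norm_blockOp_crabbDavie_one_le_one (hX 1)
  have r2 := apply_eq_zero_of_norm_blockOp_crabbDavie_two_le_one (hX 2)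
  have top (m : M) : A 0 m 0 = 0 ∧ A 1 m 0 = 0 ∧ A 2 m 0 = 0 := by
    have hcoord (i j : Fin 3) (k : Fin 8) := congr(($(hAB i j m)) k)
    have h102 := hcoord 1 0 2
    have h011 := hcoord 0 1 1
    have h021 := hcoord 0 2 1
    simp only [crabbDavie_zero_apply, crabbDavie_one_apply, crabbDavie_two_apply, PiLp.add_apply,
      cons_val, mid, r0, r1, r2, neg_zero, add_zero] at h102 h011 h021
    exact ⟨h102, h011, h021⟩
  ext m k
  fin_cases i <;> fin_cases k <;> simp [mid, top, r0, r1, r2]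

end Extension

/-- The Crabb–Davie triple, viewed as operators on the Hilbert space `ℂ⁸`, is extremal. -/
theorem statement7 :
    IsExtremal (fun i : Fin 3 => (Matrix.toEuclideanCLM (𝕜 := ℂ) (cdMatrix i) :
      EuclideanSpace ℂ (Fin 8) →L[ℂ] EuclideanSpace ℂ (Fin 8))) := by
  intro M _ _ _ A B hX hcomm
  exact crabbDavie_extension_eq_zero hX fun i j => blockOp_comp_comm_fst (hcomm i j)
end
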